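/- arXiv:1911.09153 — 2 statements merged into one kernel-verified Lean document; each statement's English description precedes it below -/
import Mathlib

section
/- Under the noiseless (hardmax) response model, for any slate query q = (x_1,…,x_k) with induced optimal recommendation slate q' = (y*_1,…,y*_k) where y*_i maximizes posterior expected utility given response x_i, the EVOI of q' (as a query) is at least the EVOI of q: EVOI(q';P) ≥ EVOI(q;P). -/
open Matrix BigOperators

/-- Query iteration monotonicity (noiseless responses): replacing a slate query by its
induced optimal recommendation slate does not decrease EVOI. -/
theorem queryIteration_monotone {d k : ℕ} {ι : Type} [Fintype ι]
    (X : Finset (Fin d → ℝ)) (hX : X.Nonempty)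
    (u : ι → Fin d → ℝ) (P : ι → ℝ)
    (hP0 : ∀ i, 0 ≤ P i) (hP1 : ∑ i, P i = 1)
    (x : Fin k → Fin d → ℝ) (hxmem : ∀ j, x j ∈ X)
    (resp : ι → Fin k)
    (hresp : ∀ i j, x j ⬝ᵥ u i ≤ x (resp i) ⬝ᵥ u i)
    (ystar : Fin k → Fin d → ℝ) (hymem : ∀ j, ystar j ∈ X)
    (hyopt : ∀ j, ∀ z ∈ X,
      ∑ i, (if resp i = j then P i else 0) * (z ⬝ᵥ u i) ≤
        ∑ i, (if resp i = j then P i else 0) * (ystar j ⬝ᵥ u i))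
    (resp' : ι → Fin k)
    (hresp' : ∀ i j, ystar j ⬝ᵥ u i ≤ ystar (resp' i) ⬝ᵥ u i)
    (ystar' : Fin k → Fin d → ℝ) (hymem' : ∀ j, ystar' j ∈ X)
    (hyopt' : ∀ j, ∀ z ∈ X,
      ∑ i, (if resp' i = j then P i else 0) * (z ⬝ᵥ u i) ≤
        ∑ i, (if resp' i = j then P i else 0) * (ystar' j ⬝ᵥ u i)) :
    (∑ i, P i * (ystar (resp i) ⬝ᵥ u i)) -
        X.sup' hX (fun z => ∑ i, P i * (z ⬝ᵥ u i)) ≤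
      (∑ i, P i * (ystar' (resp' i) ⬝ᵥ u i)) -
        X.sup' hX (fun z => ∑ i, P i * (z ⬝ᵥ u i)) := by
  apply sub_le_sub_right
  have key : ∀ f : Fin k → (Fin d → ℝ),
      ∑ i, P i * (f (resp' i) ⬝ᵥ u i)
        = ∑ j, ∑ i, (if resp' i = j then P i else 0) * (f j ⬝ᵥ u i) := by
    intro f
    rw [Finset.sum_comm]
    refine Finset.sum_congr rfl fun i _ => ?_
    simp [ite_mul]
  calc ∑ i, P i * (ystar (resp i) ⬝ᵥ u i)
      ≤ ∑ i, P i * (ystar (resp' i) ⬝ᵥ u i) := by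
        refine Finset.sum_le_sum fun i _ => ?_
        exact mul_le_mul_of_nonneg_left (hresp' i (resp i)) (hP0 i)
    _ = ∑ j, ∑ i, (if resp' i = j then P i else 0) * (ystar j ⬝ᵥ u i) := key _
    _ ≤ ∑ j, ∑ i, (if resp' i = j then P i else 0) * (ystar' j ⬝ᵥ u i) :=
        Finset.sum_le_sum fun j _ => hyopt' j (ystar j) (hymem j)
    _ = ∑ i, P i * (ystar' (resp' i) ⬝ᵥ u i) := (key _).symm
end

section
/- Swapping an item of a noiseless-response slate for its posterior-optimal recommendation under its own response partition does not decrease the expected max objective: for any y_1,…,y_k ∈ X with response regions U_i = {u : i = argmax_j y_j·u}, and y'_i ∈ argmax_{y∈X} Σ_{u∈U_i} P(u)(y·u), we have Σ_u P(u)·max_j(y'_j·u) ≥ Σ_i Σ_{u∈U_i} P(u)(y'_i·u) ≥ Σ_u P(u)·max_j(y_j·u). -/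
open Matrix BigOperators

lemma group_by_resp {k : ℕ} {ι : Type} [Fintype ι] (P : ι → ℝ) (resp : ι → Fin k)
    (f : Fin k → ι → ℝ) :
    ∑ i, P i * f (resp i) i = ∑ j, ∑ i, (if resp i = j then P i else 0) * f j i := by
  rw [Finset.sum_comm]
  refine Finset.sum_congr rfl fun i _ => ?_
  rw [Finset.sum_congr rfl (fun j _ => by rw [ite_mul, zero_mul])]
  simp [Finset.sum_ite_eq']

/-- Key inequality behind QueryIteration: swapping each slate item for the
posterior-optimal recommendation under its own response region does not decrease
the expected-max slate objective. -/
theorem queryIteration_key_inequality {d k : ℕ} {ι : Type} [Fintype ι]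
    (hk : 0 < k)
    (X : Finset (Fin d → ℝ)) (hX : X.Nonempty)
    (u : ι → Fin d → ℝ) (P : ι → ℝ)
    (hP0 : ∀ i, 0 ≤ P i) (hP1 : ∑ i, P i = 1)
    (y : Fin k → Fin d → ℝ) (hymem : ∀ j, y j ∈ X)
    (resp : ι → Fin k)
    (hresp : ∀ i j, y j ⬝ᵥ u i ≤ y (resp i) ⬝ᵥ u i)
    (y' : Fin k → Fin d → ℝ) (hy'mem : ∀ j, y' j ∈ X)
    (hy'opt : ∀ j, ∀ z ∈ X,
      ∑ i, (if resp i = j then P i else 0) * (z ⬝ᵥ u i) ≤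
        ∑ i, (if resp i = j then P i else 0) * (y' j ⬝ᵥ u i)) :
    (∑ i, P i * (y (resp i) ⬝ᵥ u i) ≤ ∑ i, P i * (y' (resp i) ⬝ᵥ u i)) ∧
    (∑ i, P i * (y' (resp i) ⬝ᵥ u i) ≤
        ∑ i, P i *
          (Finset.univ.sup' ⟨⟨0, hk⟩, Finset.mem_univ _⟩ fun j : Fin k => y' j ⬝ᵥ u i)) ∧
    (∑ i, P i *
        (Finset.univ.sup' ⟨⟨0, hk⟩, Finset.mem_univ _⟩ fun j : Fin k => y j ⬝ᵥ u i) ≤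
      ∑ i, P i *
        (Finset.univ.sup' ⟨⟨0, hk⟩, Finset.mem_univ _⟩ fun j : Fin k => y' j ⬝ᵥ u i)) := by
  have h1 : ∑ i, P i * (y (resp i) ⬝ᵥ u i) ≤ ∑ i, P i * (y' (resp i) ⬝ᵥ u i) := by
    rw [group_by_resp P resp (fun j i => y j ⬝ᵥ u i),
        group_by_resp P resp (fun j i => y' j ⬝ᵥ u i)]
    exact Finset.sum_le_sum fun j _ => hy'opt j (y j) (hymem j)
  have h2 : ∑ i, P i * (y' (resp i) ⬝ᵥ u i) ≤
      ∑ i, P i *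
        (Finset.univ.sup' ⟨⟨0, hk⟩, Finset.mem_univ _⟩ fun j : Fin k => y' j ⬝ᵥ u i) := by
    refine Finset.sum_le_sum fun i _ => mul_le_mul_of_nonneg_left ?_ (hP0 i)
    exact Finset.le_sup' (fun j : Fin k => y' j ⬝ᵥ u i) (Finset.mem_univ (resp i))
  have h3 : ∀ i, (Finset.univ.sup' ⟨⟨0, hk⟩, Finset.mem_univ _⟩
      fun j : Fin k => y j ⬝ᵥ u i) = y (resp i) ⬝ᵥ u i := fun i =>
    le_antisymm (Finset.sup'_le _ _ fun j _ => hresp i j)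
      (Finset.le_sup' (fun j : Fin k => y j ⬝ᵥ u i) (Finset.mem_univ (resp i)))
  refine ⟨h1, h2, ?_⟩
  calc ∑ i, P i * (Finset.univ.sup' ⟨⟨0, hk⟩, Finset.mem_univ _⟩
          fun j : Fin k => y j ⬝ᵥ u i)
      = ∑ i, P i * (y (resp i) ⬝ᵥ u i) := by simp_rw [h3]
    _ ≤ ∑ i, P i * (y' (resp i) ⬝ᵥ u i) := h1
    _ ≤ _ := h2
end
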